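/- Let (ϑ_t) be an E_0-semigroup on B(H), ξ a unit vector, E^B_t = ϑ_t(ξξ*)H and E^A_t the intertwiner spaces. The isometries u'_t : E^A_t → E^B_t, x'_t ↦ x'_t ξ, reverse products: u'_{t+s}(x'_t y'_s) = u'_s(y'_s) · u'_t(x'_t), where the product on E^B spaces is y_s y_t := ϑ_t(y_s ξ*)y_t. Hence the Arveson system is anti-isomorphic to the Bhat system. -/

import Mathlib

open scoped InnerProductSpace

/-- The rank-one operator `u v* : z ↦ u⟨v,z⟩`. -/
noncomputable def rankOne {H : Type*} [NormedAddCommGroup H] [InnerProductSpace ℂ H]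
    (u v : H) : H →L[ℂ] H :=
  (innerSL ℂ v).smulRight u

/-- Normality (σ-weak continuity) of a map on `B(H)`, expressed via weak-operator
convergence of bounded nets. -/
def IsNormalMap {H : Type*} [NormedAddCommGroup H] [InnerProductSpace ℂ H]
    (ϑ : (H →L[ℂ] H) → (H →L[ℂ] H)) : Prop :=
  ∀ (ι : Type) (l : Filter ι) (f : ι → H →L[ℂ] H) (b : H →L[ℂ] H),
    (∀ i, ‖f i‖ ≤ 1) →
    (∀ g g' : H, Filter.Tendsto (fun i => ⟪g, f i g'⟫_ℂ) l (nhds ⟪g, b g'⟫_ℂ)) →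
    ∀ h h' : H, Filter.Tendsto (fun i => ⟪h, ϑ (f i) h'⟫_ℂ) l (nhds ⟪h, ϑ b h'⟫_ℂ)

/- Since `ξ` is a unit vector, `(y'ξ)ξ*` maps `ξ` to `y'ξ`; hence
`x'y'ξ = x'((y'ξ)ξ*)ξ = ϑt((y'ξ)ξ*)x'ξ` by the intertwining relation for `x'`. -/

theorem rankOne_apply {H : Type*} [NormedAddCommGroup H] [InnerProductSpace ℂ H]
    (u v z : H) : rankOne u v z = ⟪v, z⟫_ℂ • u :=
  rfl

theorem rankOne_apply_self_of_inner_self_eq_one {H : Type*} [NormedAddCommGroup H]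
    [InnerProductSpace ℂ H] (u : H) {ξ : H} (hξ : ⟪ξ, ξ⟫_ℂ = 1) : rankOne u ξ ξ = u := by
  rw [rankOne_apply, hξ, one_smul]

theorem arveson_bhat_antiisomorphic_general {H : Type*} [NormedAddCommGroup H]
    [InnerProductSpace ℂ H] [CompleteSpace H]
    (ϑt : (H →L[ℂ] H) →⋆ₐ[ℂ] (H →L[ℂ] H))
    (ξ : H) (hξ : ⟪ξ, ξ⟫_ℂ = 1)
    (x' y' : H →L[ℂ] H)
    (hx' : ∀ a, ϑt a * x' = x' * a) :
    (x' * y') ξ = ϑt (rankOne (y' ξ) ξ) (x' ξ) :=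
  calc (x' * y') ξ = (x' * rankOne (y' ξ) ξ) ξ := by
        rw [mul_apply_eq_comp, mul_apply_eq_comp,
          rankOne_apply_self_of_inner_self_eq_one _ hξ]
    _ = ϑt (rankOne (y' ξ) ξ) (x' ξ) := by rw [← hx']; rfl

/-- **The Arveson system is anti-isomorphic to the Bhat system.**
For members `ϑt, ϑs` of an E₀-semigroup on `B(H)` (so `ϑ_{t+s} = ϑt ∘ ϑs`) and a unit
vector `ξ`, the isometries `u'_r : E^A_r → E^B_r`, `x' ↦ x'ξ`, reverse products:
for intertwiners `x'` of `ϑt` and `y'` of `ϑs`,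
`u'_{t+s}(x'y') = u'_s(y') · u'_t(x') = ϑt((y'ξ)ξ*)(x'ξ)`. -/
theorem arveson_bhat_antiisomorphic {H : Type*} [NormedAddCommGroup H]
    [InnerProductSpace ℂ H] [CompleteSpace H]
    (ϑt ϑs ϑts : (H →L[ℂ] H) →⋆ₐ[ℂ] (H →L[ℂ] H))
    (hϑt : IsNormalMap (H := H) ϑt) (hϑs : IsNormalMap (H := H) ϑs)
    (hcomp : ∀ a, ϑts a = ϑt (ϑs a))
    (ξ : H) (hξ : ⟪ξ, ξ⟫_ℂ = 1)
    (x' y' : H →L[ℂ] H)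
    (hx' : ∀ a, ϑt a * x' = x' * a)
    (hy' : ∀ a, ϑs a * y' = y' * a) :
    (x' * y') ξ = ϑt (rankOne (y' ξ) ξ) (x' ξ) :=
  arveson_bhat_antiisomorphic_general ϑt ξ hξ x' y' hx'
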